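/- arXiv:2509.22571 — 4 statements merged into one kernel-verified Lean document; each statement's English description precedes it below -/
import Mathlib

section
/- Let n ≥ 8 and let W_n = C_{n-1} ∨ K_1 be the wheel graph with hub h and rim cycle C_{n-1}. Let B be a subset of the rim vertices with |B| ≥ 2. Then {h} ∪ B is a mutual-visibility set of W_n if and only if B consists of exactly two vertices u and v with d_{C_{n-1}}(u,v) ≤ 2 (distance measured in the rim cycle). -/
open SimpleGraph Polynomial

/-- Two vertices `u` and `v` are `X`-visible in `G` if some shortest `u`–`v` path
has no internal vertex in `X`, i.e. its support meets `X` only possibly in `{u, v}`. -/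
def XVisible {V : Type*} (G : SimpleGraph V) (X : Set V) (u v : V) : Prop :=
  ∃ p : G.Walk u v, p.IsPath ∧ p.length = G.dist u v ∧
    ∀ w ∈ p.support, w ∈ X → w = u ∨ w = v

/-- `X` is a mutual-visibility set of `G` if every pair of vertices of `X` is `X`-visible. -/
def MutualVisibilitySet {V : Type*} (G : SimpleGraph V) (X : Set V) : Prop :=
  ∀ u ∈ X, ∀ v ∈ X, XVisible G X u v

open Classical in
/-- The visibility polynomial: `∑ m_k x^k` where `m_k` is the number of
mutual-visibility sets of cardinality `k`. -/
noncomputable def visPoly {V : Type*} [Fintype V] (G : SimpleGraph V) : Polynomial ℕ :=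
  ∑ S ∈ Finset.univ.powerset.filter (fun S : Finset V => MutualVisibilitySet G ↑S),
    Polynomial.X ^ S.card

/-- The wheel graph with rim `cycleGraph m` (on `some`-vertices) and hub `none`. -/
def wheelGraph (m : ℕ) : SimpleGraph (Option (Fin m)) :=
  SimpleGraph.fromRel (fun u v =>
    (u = none ∧ v ≠ none) ∨
    ∃ i j : Fin m, u = some i ∧ v = some j ∧ (SimpleGraph.cycleGraph m).Adj i j)

/-- The shell graph with path `pathGraph m` (on `some`-vertices) and apex `none`. -/
def shellGraph (m : ℕ) : SimpleGraph (Option (Fin m)) :=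
  SimpleGraph.fromRel (fun u v =>
    (u = none ∧ v ≠ none) ∨
    ∃ i j : Fin m, u = some i ∧ v = some j ∧ (SimpleGraph.pathGraph m).Adj i j)

/-- The bow graph: apex `none` joined to two disjoint paths of `a` and `b` vertices. -/
def bowGraph (a b : ℕ) : SimpleGraph (Option (Fin a ⊕ Fin b)) :=
  SimpleGraph.fromRel (fun u v =>
    (u = none ∧ v ≠ none) ∨
    (∃ i j : Fin a, u = some (Sum.inl i) ∧ v = some (Sum.inl j) ∧ (SimpleGraph.pathGraph a).Adj i j) ∨
    (∃ i j : Fin b, u = some (Sum.inr i) ∧ v = some (Sum.inr j) ∧ (SimpleGraph.pathGraph b).Adj i j))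

/-- The friendship graph: center `none`; the `i`-th triangle has the two
noncentral vertices `some (i, 0)` and `some (i, 1)`. -/
def friendshipGraph (n : ℕ) : SimpleGraph (Option (Fin n × Fin 2)) :=
  SimpleGraph.fromRel (fun u v =>
    (u = none ∧ v ≠ none) ∨
    ∃ (i : Fin n) (x y : Fin 2), u = some (i, x) ∧ v = some (i, y) ∧ x ≠ y)

/-- The helm graph: a copy of the wheel (the `Sum.inl`-vertices) together with a
pendant vertex `Sum.inr k` attached to each rim vertex `Sum.inl (some k)`. -/
def helmGraph (m : ℕ) : SimpleGraph (Option (Fin m) ⊕ Fin m) :=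
  SimpleGraph.fromRel (fun u v =>
    (∃ x y : Option (Fin m), u = Sum.inl x ∧ v = Sum.inl y ∧ (wheelGraph m).Adj x y) ∨
    (∃ k : Fin m, u = Sum.inl (some k) ∧ v = Sum.inr k))

/-- `W` is a `c_Q`-visible set: `W ⊆ V \ Q`, every pair of vertices of `W` is
`Q`-visible, and `{u, w}` is `Q`-visible for all `u ∈ Q`, `w ∈ W`. -/
def CQVisible {V : Type*} (G : SimpleGraph V) (Q W : Set V) : Prop :=
  W ⊆ Qᶜ ∧ (∀ u ∈ W, ∀ v ∈ W, XVisible G Q u v) ∧ (∀ u ∈ Q, ∀ w ∈ W, XVisible G Q u w)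

/-- An absolute `c_Q`-visible set: a `c_Q`-visible set for which `Q` is moreover a
mutual-visibility set of `G`. -/
def AbsoluteCQVisible {V : Type*} (G : SimpleGraph V) (Q W : Set V) : Prop :=
  CQVisible G Q W ∧ MutualVisibilitySet G Q

/-!
The hub lies in the set and is adjacent to every vertex, so only pairs of distinct rim vertices
`i, j ∈ B` matter. Adjacent ones see each other; otherwise they are at distance 2 and the hub is
blocked, so they see each other exactly when they have a common rim neighbour outside `B`.
Writing rim vertices as `a + s` with small `s : ℤ`, on a cycle of length at least 7 the only
vertices within distance 2 of both ends of a path `i - k - j` are `i`, `k`, `j`. Hence a third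
point of `B` would be the blocking midpoint of any non-adjacent pair, so all three pairs would be
adjacent, i.e. a triangle in the cycle.
-/

lemma SimpleGraph.Reachable.dist_le_two_iff {V : Type*} {G : SimpleGraph V} {u v : V}
    (h : G.Reachable u v) (huv : u ≠ v) :
    G.dist u v ≤ 2 ↔ G.Adj u v ∨ ∃ w, G.Adj u w ∧ G.Adj w v := by
  constructor
  · obtain ⟨p, hp⟩ := h.exists_walk_length_eq_dist
    rw [← hp]
    rcases p with _ | ⟨h₁, _ | ⟨h₂, _ | ⟨_, _⟩⟩⟩
    · exact absurd rfl huv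
    · exact fun _ => .inl h₁
    · exact fun _ => .inr ⟨_, h₁, h₂⟩
    · simp
  · rintro (hadj | ⟨w, h₁, h₂⟩)
    · exact (dist_eq_one_iff_adj.mpr hadj).trans_le one_le_two
    · exact (dist_le (.cons h₁ (.cons h₂ .nil))).trans (by simp)

lemma SimpleGraph.dist_eq_two_of_adj_of_adj {V : Type*} {G : SimpleGraph V} {u v w : V}
    (huv : u ≠ v) (hadj : ¬G.Adj u v) (h₁ : G.Adj u w) (h₂ : G.Adj w v) : G.dist u v = 2 := by
  have hle : G.dist u v ≤ 2 := dist_le (.cons h₁ (.cons h₂ .nil))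
  have hpos : 0 < G.dist u v := (h₁.reachable.trans h₂.reachable).pos_dist_of_ne huv
  have hne : G.dist u v ≠ 1 := mt dist_eq_one_iff_adj.mp hadj
  omega

section Visibility

variable {V : Type*} {G : SimpleGraph V} {X : Set V} {u v : V}

lemma XVisible.refl (G : SimpleGraph V) (X : Set V) (u : V) : XVisible G X u u :=
  ⟨.nil, .nil, by simp, by simp_all⟩

lemma XVisible.symm (h : XVisible G X u v) : XVisible G X v u := by
  obtain ⟨p, hp, hlen, hX⟩ := h
  refine ⟨p.reverse, hp.reverse, by rw [Walk.length_reverse, hlen, dist_comm], fun w hw hwX => ?_⟩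
  exact (hX w (by simpa using hw) hwX).symm

lemma SimpleGraph.Adj.xVisible (h : G.Adj u v) (X : Set V) : XVisible G X u v :=
  ⟨h.toWalk, by simp [h.ne], by simp [dist_eq_one_iff_adj.mpr h], by simp_all⟩

lemma xVisible_iff_of_dist_eq_two (h : G.dist u v = 2) :
    XVisible G X u v ↔ ∃ w ∉ X, G.Adj u w ∧ G.Adj w v := by
  constructor
  · rintro ⟨p, -, hlen, hX⟩
    rw [h] at hlen
    rcases p with _ | ⟨h₁, _ | ⟨h₂, _ | ⟨_, _⟩⟩⟩
    · simp at hlen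
    · simp at hlen
    · refine ⟨_, fun hw => ?_, h₁, h₂⟩
      rcases hX _ (by simp) hw with hw | hw
      exacts [h₁.ne hw.symm, h₂.ne hw]
    · simp at hlen
  · rintro ⟨w, hw, h₁, h₂⟩
    have huv : u ≠ v := by rintro rfl; simp at h
    refine ⟨.cons h₁ (.cons h₂ .nil), ?_, by simp [h], ?_⟩
    · simp [huv, h₁.ne, h₂.ne]
    · intro x hx hxX
      simp only [Walk.support_cons, Walk.support_nil, List.mem_cons, List.not_mem_nil,
        or_false] at hx
      rcases hx with rfl | rfl | rfl <;> simp_all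

lemma mutualVisibilitySet_insert_iff_of_forall_adj {h : V} {S : Set V}
    (hh : ∀ v, v ≠ h → G.Adj h v) :
    MutualVisibilitySet G (insert h S) ↔
      ∀ u ∈ S, ∀ v ∈ S, u ≠ v → XVisible G (insert h S) u v := by
  refine ⟨fun hS u hu v hv _ => hS u (.inr hu) v (.inr hv), fun hS u hu v hv => ?_⟩
  by_cases huv : u = v
  · exact huv ▸ XVisible.refl G _ u
  rcases hu with rfl | hu <;> rcases hv with rfl | hv
  · exact absurd rfl huv
  · exact (hh v (Ne.symm huv)).xVisible _
  · exact ((hh u huv).xVisible _).symm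
  · exact hS u hu v hv huv

end Visibility

section Wheel

variable {m : ℕ}

lemma wheelGraph_adj_some_some {i j : Fin m} :
    (wheelGraph m).Adj (some i) (some j) ↔ (cycleGraph m).Adj i j := by
  simp only [wheelGraph, fromRel_adj, ne_eq, Option.some.injEq, reduceCtorEq, false_and,
    exists_and_left, exists_eq_left', false_or]
  exact ⟨fun ⟨_, h⟩ => h.elim id (·.symm), fun h => ⟨h.ne, .inl h⟩⟩

lemma wheelGraph_adj_none {v : Option (Fin m)} (hv : v ≠ none) : (wheelGraph m).Adj none v := by
  simp [wheelGraph, fromRel_adj, hv, Ne.symm hv]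

lemma wheelGraph_dist_some_some {i j : Fin m} (hij : i ≠ j) (hadj : ¬(cycleGraph m).Adj i j) :
    (wheelGraph m).dist (some i) (some j) = 2 :=
  dist_eq_two_of_adj_of_adj (by simpa using hij) (by rwa [wheelGraph_adj_some_some])
    (wheelGraph_adj_none (by simp)).symm (wheelGraph_adj_none (by simp))

lemma wheelGraph_xVisible_some_some_iff {B : Set (Fin m)} {i j : Fin m} (hij : i ≠ j) :
    XVisible (wheelGraph m) (insert none (some '' B)) (some i) (some j) ↔
      (cycleGraph m).Adj i j ∨ ∃ k ∉ B, (cycleGraph m).Adj i k ∧ (cycleGraph m).Adj k j := by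
  by_cases hadj : (cycleGraph m).Adj i j
  · exact iff_of_true ((wheelGraph_adj_some_some.mpr hadj).xVisible _) (.inl hadj)
  rw [xVisible_iff_of_dist_eq_two (wheelGraph_dist_some_some hij hadj)]
  simp only [Option.exists, Set.mem_insert_iff, reduceCtorEq, true_or, not_true, false_and,
    false_or, (Option.some_injective _).mem_set_image, wheelGraph_adj_some_some, hadj]

lemma wheelGraph_mutualVisibilitySet_insert_none_iff {B : Set (Fin m)} :
    MutualVisibilitySet (wheelGraph m) (insert none (some '' B)) ↔
      ∀ i ∈ B, ∀ j ∈ B, i ≠ j →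
        (cycleGraph m).Adj i j ∨ ∃ k ∉ B, (cycleGraph m).Adj i k ∧ (cycleGraph m).Adj k j := by
  rw [mutualVisibilitySet_insert_iff_of_forall_adj fun _ => wheelGraph_adj_none]
  simp only [Set.forall_mem_image, ne_eq, Option.some.injEq]
  exact forall₂_congr fun i _ => forall₂_congr fun j _ =>
    forall_congr' fun hij => wheelGraph_xVisible_some_some_iff hij

end Wheel

section Cycle

open Fin.CommRing

variable {m : ℕ}

lemma Fin.intCast_eq_intCast_iff_of_abs_sub_lt [NeZero m] {s t : ℤ} (h : |t - s| < m) :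
    (s : Fin m) = t ↔ s = t := by
  refine ⟨fun hst => ?_, congrArg _⟩
  have hdvd : (m : ℤ) ∣ t - s := ((CharP.intCast_eq_intCast (Fin m) m).mp hst).dvd
  linarith [Int.eq_zero_of_abs_lt_dvd hdvd h]

lemma cycleGraph_exists_eq_add_intCast_of_adj [NeZero m] {a b : Fin m}
    (h : (cycleGraph m).Adj a b) : ∃ e : ℤ, |e| = 1 ∧ b = a + e := by
  obtain _ | _ | k := m
  · exact a.elim0
  · exact absurd h cycleGraph_one_adj
  · rcases cycleGraph_adj.mp h with h | h
    · exact ⟨-1, by simp, by push_cast; linear_combination -h⟩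
    · exact ⟨1, by simp, by push_cast; linear_combination h⟩

lemma cycleGraph_exists_eq_add_intCast_of_walk [NeZero m] {a b : Fin m}
    (p : (cycleGraph m).Walk a b) : ∃ s : ℤ, |s| ≤ p.length ∧ b = a + s := by
  induction p with
  | nil => exact ⟨0, by simp, by simp⟩
  | cons h p ih =>
    obtain ⟨e, he, rfl⟩ := cycleGraph_exists_eq_add_intCast_of_adj h
    obtain ⟨s, hs, rfl⟩ := ih
    refine ⟨e + s, (abs_add_le _ _).trans ?_, by push_cast; ring⟩
    rw [Walk.length_cons, Nat.cast_succ, he]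
    linarith

lemma cycleGraph_exists_eq_add_intCast_of_dist_le [NeZero m] {a b : Fin m} {d : ℕ}
    (h : (cycleGraph m).dist a b ≤ d) : ∃ s : ℤ, |s| ≤ d ∧ b = a + s := by
  obtain ⟨p, hp⟩ := (cycleGraph_preconnected a b).exists_walk_length_eq_dist
  obtain ⟨s, hs, rfl⟩ := cycleGraph_exists_eq_add_intCast_of_walk p
  exact ⟨s, hs.trans (by exact_mod_cast hp ▸ h), rfl⟩

lemma cycleGraph_not_adj_of_adj_of_adj (hm : 4 ≤ m) {a b c : Fin m}
    (hab : (cycleGraph m).Adj a b) (hbc : (cycleGraph m).Adj b c) : ¬(cycleGraph m).Adj a c := by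
  have : NeZero m := ⟨by omega⟩
  intro hac
  obtain ⟨e, he, rfl⟩ := cycleGraph_exists_eq_add_intCast_of_adj hab
  obtain ⟨f, hf, rfl⟩ := cycleGraph_exists_eq_add_intCast_of_adj hbc
  obtain ⟨g, hg, hc⟩ := cycleGraph_exists_eq_add_intCast_of_adj hac
  rw [abs_eq zero_le_one] at he hf hg
  have hbound : |g - (e + f)| < m := abs_sub_lt_iff.mpr ⟨by omega, by omega⟩
  have : e + f = g := (Fin.intCast_eq_intCast_iff_of_abs_sub_lt hbound).mp <| by
    rw [← add_right_inj a, ← hc]; push_cast; ring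
  omega

lemma cycleGraph_eq_or_eq_or_eq_of_dist_le_two (hm : 7 ≤ m) {a b c x : Fin m}
    (hac : (cycleGraph m).Adj a c) (hcb : (cycleGraph m).Adj c b) (hab : a ≠ b)
    (hax : (cycleGraph m).dist a x ≤ 2) (hxb : (cycleGraph m).dist x b ≤ 2) :
    x = a ∨ x = c ∨ x = b := by
  have : NeZero m := ⟨by omega⟩
  obtain ⟨e, he, rfl⟩ := cycleGraph_exists_eq_add_intCast_of_adj hac
  obtain ⟨f, hf, rfl⟩ := cycleGraph_exists_eq_add_intCast_of_adj hcb
  obtain ⟨s, hs, rfl⟩ := cycleGraph_exists_eq_add_intCast_of_dist_le hax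
  obtain ⟨t, ht, hb⟩ := cycleGraph_exists_eq_add_intCast_of_dist_le hxb
  rw [abs_eq zero_le_one] at he hf
  rw [Nat.cast_ofNat, abs_le] at hs ht
  have hef : e + f ≠ 0 := fun h => hab <| by rw [add_assoc, ← Int.cast_add, h]; simp
  -- the offset error lies in `[-6, 6]`, so it vanishes modulo `m ≥ 7`
  have hbound : |s + t - (e + f)| < m := abs_sub_lt_iff.mpr ⟨by omega, by omega⟩
  have : e + f = s + t := (Fin.intCast_eq_intCast_iff_of_abs_sub_lt hbound).mp <| by
    rw [← add_right_inj a]; push_cast; rw [← add_assoc, ← add_assoc, hb]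
  rcases (by omega : s = 0 ∨ s = e ∨ s = e + f) with rfl | rfl | rfl
  · simp
  · simp
  · push_cast; simp [add_assoc]

lemma cycleGraph_card_le_two (hm : 7 ≤ m) {B : Finset (Fin m)}
    (hB : ∀ i ∈ B, ∀ j ∈ B, i ≠ j →
      (cycleGraph m).Adj i j ∨ ∃ k ∉ B, (cycleGraph m).Adj i k ∧ (cycleGraph m).Adj k j) :
    B.card ≤ 2 := by
  have hdist : ∀ i ∈ B, ∀ j ∈ B, (cycleGraph m).dist i j ≤ 2 := fun i hi j hj => by
    by_cases hij : i = j
    · simp [hij]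
    · exact ((cycleGraph_preconnected i j).dist_le_two_iff hij).mpr <|
        (hB i hi j hj hij).imp_right fun ⟨k, _, hik, hkj⟩ => ⟨k, hik, hkj⟩
  -- a witness `k ∉ B` would have to be the third point of `B`
  have hadj : ∀ i ∈ B, ∀ j ∈ B, ∀ x ∈ B, i ≠ j → x ≠ i → x ≠ j → (cycleGraph m).Adj i j := by
    intro i hi j hj x hx hij hxi hxj
    refine (hB i hi j hj hij).resolve_right fun ⟨k, hk, hik, hkj⟩ => ?_
    rcases cycleGraph_eq_or_eq_or_eq_of_dist_le_two hm hik hkj hij (hdist i hi x hx)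
      (hdist x hx j hj) with rfl | rfl | rfl
    exacts [hxi rfl, hk hx, hxj rfl]
  by_contra! h
  obtain ⟨x, hx, y, hy, z, hz, hxy, hxz, hyz⟩ := Finset.two_lt_card.mp h
  exact cycleGraph_not_adj_of_adj_of_adj (by omega) (hadj x hx y hy z hz hxy hxz.symm hyz.symm)
    (hadj y hy z hz x hx hyz hxy hxz) (hadj x hx z hz y hy hxz hxy.symm hyz)

lemma cycleGraph_forall_adj_or_exists_iff (hm : 7 ≤ m) {B : Finset (Fin m)} (hB : 2 ≤ B.card) :
    (∀ i ∈ B, ∀ j ∈ B, i ≠ j →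
      (cycleGraph m).Adj i j ∨ ∃ k ∉ B, (cycleGraph m).Adj i k ∧ (cycleGraph m).Adj k j) ↔
      ∃ u v, u ≠ v ∧ B = {u, v} ∧ (cycleGraph m).dist u v ≤ 2 := by
  constructor
  · intro h
    obtain ⟨u, v, huv, rfl⟩ := Finset.card_eq_two.mp (le_antisymm (cycleGraph_card_le_two hm h) hB)
    refine ⟨u, v, huv, rfl, ((cycleGraph_preconnected u v).dist_le_two_iff huv).mpr ?_⟩
    exact (h u (by simp) v (by simp) huv).imp_right fun ⟨k, _, huk, hkv⟩ => ⟨k, huk, hkv⟩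
  · rintro ⟨u, v, huv, rfl, hdist⟩ i hi j hj hij
    have hdist' : (cycleGraph m).dist i j ≤ 2 := by
      simp only [Finset.mem_insert, Finset.mem_singleton] at hi hj
      rcases hi with rfl | rfl <;> rcases hj with rfl | rfl <;> simp_all [dist_comm]
    rcases ((cycleGraph_preconnected i j).dist_le_two_iff hij).mp hdist' with hadj | ⟨k, hik, hkj⟩
    · exact .inl hadj
    · refine .inr ⟨k, ?_, hik, hkj⟩
      simp only [Finset.mem_insert, Finset.mem_singleton] at hi hj ⊢
      rcases hi with rfl | rfl <;> rcases hj with rfl | rfl <;> simp_all [hik.ne', hkj.ne]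

end Cycle

theorem wheel_hub_mutualVisibility_iff (n : ℕ) (hn : 8 ≤ n)
    (B : Finset (Fin (n - 1))) (hB : 2 ≤ B.card) :
    MutualVisibilitySet (wheelGraph (n - 1))
      (insert (none : Option (Fin (n - 1))) (some '' (B : Set (Fin (n - 1))))) ↔
      ∃ u v : Fin (n - 1), u ≠ v ∧ B = {u, v} ∧
        (SimpleGraph.cycleGraph (n - 1)).dist u v ≤ 2 := by
  rw [wheelGraph_mutualVisibilitySet_insert_none_iff]
  exact cycleGraph_forall_adj_or_exists_iff (by omega) hB
end

section
/- Let n ≥ 8 and let W_n be the wheel graph with hub h and rim cycle C_{n-1}. Every subset S of the rim vertices (i.e., S ⊆ V(W_n) \ {h}) is a mutual-visibility set of W_n. -/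
open SimpleGraph Polynomial

lemma wheel_adj_hub {m : ℕ} (i : Fin m) : (wheelGraph m).Adj (some i) none := by
  rw [wheelGraph, SimpleGraph.fromRel_adj]
  exact ⟨by simp, Or.inr (Or.inl ⟨rfl, by simp⟩)⟩

theorem wheel_rim_subset_mutualVisibility (n : ℕ) (hn : 8 ≤ n)
    (S : Set (Option (Fin (n - 1)))) (hS : none ∉ S) :
    MutualVisibilitySet (wheelGraph (n - 1)) S := by
  intro u hu v hv
  obtain ⟨i, rfl⟩ : ∃ i, u = some i := Option.ne_none_iff_exists'.mp (fun h => hS (h ▸ hu))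
  obtain ⟨j, rfl⟩ : ∃ j, v = some j := Option.ne_none_iff_exists'.mp (fun h => hS (h ▸ hv))
  by_cases hij : i = j
  · subst hij
    exact ⟨SimpleGraph.Walk.nil, SimpleGraph.Walk.IsPath.nil, by simp [SimpleGraph.dist_self],
      by intro w hw _; simp at hw; exact Or.inl hw⟩
  by_cases hadj : (wheelGraph (n-1)).Adj (some i) (some j)
  · refine ⟨hadj.toWalk, SimpleGraph.Walk.IsPath.cons SimpleGraph.Walk.IsPath.nil (by simp [hij]),
      by simp [SimpleGraph.Walk.length_cons, (SimpleGraph.dist_eq_one_iff_adj.mpr hadj).symm], ?_⟩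
    intro w hw _
    simp [SimpleGraph.Walk.support_cons] at hw
    tauto
  · have h1 : (wheelGraph (n-1)).Adj (some i) none := wheel_adj_hub i
    have h2 : (wheelGraph (n-1)).Adj none (some j) := (wheel_adj_hub j).symm
    refine ⟨SimpleGraph.Walk.cons h1 (SimpleGraph.Walk.cons h2 SimpleGraph.Walk.nil), ?_, ?_, ?_⟩
    · refine SimpleGraph.Walk.IsPath.cons (SimpleGraph.Walk.IsPath.cons SimpleGraph.Walk.IsPath.nil (by simp)) ?_
      simp [hij]
    · have hle : (wheelGraph (n-1)).dist (some i) (some j) ≤ 2 := by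
        have := SimpleGraph.dist_le (SimpleGraph.Walk.cons h1 (SimpleGraph.Walk.cons h2 SimpleGraph.Walk.nil))
        simpa using this
      have hr : (wheelGraph (n-1)).Reachable (some i) (some j) :=
        ⟨SimpleGraph.Walk.cons h1 (SimpleGraph.Walk.cons h2 SimpleGraph.Walk.nil)⟩
      have hpos : 0 < (wheelGraph (n-1)).dist (some i) (some j) :=
        hr.pos_dist_of_ne (by simp [hij])
      have hne1 : (wheelGraph (n-1)).dist (some i) (some j) ≠ 1 := by
        intro h; exact hadj ((SimpleGraph.dist_eq_one_iff_adj).mp h)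
      simp only [SimpleGraph.Walk.length_cons, SimpleGraph.Walk.length_nil]
      omega
    · intro w hw hwS
      simp [SimpleGraph.Walk.support_cons] at hw
      rcases hw with h | h | h
      · exact Or.inl h
      · exact absurd (h ▸ hwS) hS
      · exact Or.inr h
end

section
/- Let m, n ≥ 3 and let B_{m,n} be the bow graph with apex c and disjoint paths P_{m-1} and P_{n-1}. If S is a mutual-visibility set of B_{m,n} with c ∈ S, then S ∩ V(P_{m-1}) = ∅ or S ∩ V(P_{n-1}) = ∅; that is, S = {c} ∪ A with A ⊆ V(P_{m-1}), or S = {c} ∪ B with B ⊆ V(P_{n-1}). -/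
open SimpleGraph Polynomial

lemma bow_side_lemma {a b : ℕ} : ∀ {u v : Option (Fin a ⊕ Fin b)}
    (p : (bowGraph a b).Walk u v),
    (∃ k, u = some (Sum.inl k)) → none ∉ p.support → ∃ k, v = some (Sum.inl k) := by
  intro u v p
  induction p with
  | nil => intro h _; exact h
  | @cons u w v h q ih =>
    rintro ⟨k, rfl⟩ hns
    rw [SimpleGraph.Walk.support_cons] at hns
    have hq : none ∉ q.support := fun hx => hns (List.mem_cons_of_mem _ hx)
    have hwne : w ≠ none := fun hw => hq (hw ▸ q.start_mem_support)
    apply ih ?_ hq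
    rw [bowGraph, SimpleGraph.fromRel_adj] at h
    obtain ⟨-, h | h⟩ := h <;>
      rcases h with ⟨h1, h2⟩ | ⟨i', j', h1, h2, h3⟩ | ⟨i', j', h1, h2, h3⟩ <;>
      simp_all

theorem bow_mutualVisibility_apex_separation (m n : ℕ) (hm : 3 ≤ m) (hn : 3 ≤ n)
    (S : Set (Option (Fin (m - 1) ⊕ Fin (n - 1))))
    (hS : MutualVisibilitySet (bowGraph (m - 1) (n - 1)) S) (hc : none ∈ S) :
    (∀ i : Fin (m - 1), some (Sum.inl i) ∉ S) ∨
    (∀ j : Fin (n - 1), some (Sum.inr j) ∉ S) := by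
  by_contra hcon
  push_neg at hcon
  obtain ⟨⟨i, hi⟩, j, hj⟩ := hcon
  obtain ⟨p, hp, hlen, hvis⟩ := hS _ hi _ hj
  have hmem : none ∈ p.support := by
    by_contra hnot
    obtain ⟨k, hk⟩ := bow_side_lemma p ⟨i, rfl⟩ hnot
    simp at hk
  rcases hvis none hmem hc with h | h <;> simp at h
end

section
/- Let n ≥ 8 and let H_n be the helm graph obtained from the wheel graph W_n (with hub h) by attaching a pendant vertex to each rim vertex. If A ⊆ V(W_n) with |A| ≥ 2 and B is a set of pendant vertices of H_n containing the pendant neighbor of at least one vertex of A, then A ∪ B is not a mutual-visibility set of H_n. -/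
open SimpleGraph Polynomial

theorem helm_not_mutualVisibility (n : ℕ) (hn : 8 ≤ n)
    (A : Set (Option (Fin (n - 1)))) (hA : 2 ≤ A.ncard)
    (B : Set (Fin (n - 1))) (hAB : ∃ k, some k ∈ A ∧ k ∈ B) :
    ¬ MutualVisibilitySet (helmGraph (n - 1)) (Sum.inl '' A ∪ Sum.inr '' B) := by
  intro hM
  obtain ⟨k, hkA, hkB⟩ := hAB
  obtain ⟨a, haA, hak⟩ := Set.exists_ne_of_one_lt_ncard (show 1 < A.ncard by omega) (some k)
  obtain ⟨p, hp, hlen, hsupp⟩ :=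
    hM (Sum.inr k) (Or.inr ⟨k, hkB, rfl⟩) (Sum.inl a) (Or.inl ⟨a, haA, rfl⟩)
  cases p with
  | cons h q =>
    rename_i w
    have hw : w = Sum.inl (some k) := by
      rw [helmGraph, SimpleGraph.fromRel_adj] at h
      obtain ⟨hne, h | h⟩ := h <;>
        rcases h with ⟨x, y, hx, hy, _⟩ | ⟨k', hk1, hk2⟩ <;> simp_all
    have hmem : (Sum.inl (some k) : Option (Fin (n-1)) ⊕ Fin (n-1)) ∈
        (SimpleGraph.Walk.cons h q).support := by
      rw [SimpleGraph.Walk.support_cons]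
      exact List.mem_cons_of_mem _ (hw ▸ q.start_mem_support)
    rcases hsupp _ hmem (Or.inl ⟨some k, hkA, rfl⟩) with h' | h'
    · simp_all
    · exact hak (Sum.inl.inj h').symm
end
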